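/- arXiv:2309.02852 — 4 statements merged into one kernel-verified Lean document; each statement's English description precedes it below -/
import Mathlib

section
/- In a 4-regular graph where every vertex is the midpoint of exactly two threads, every edge (α,β) has a unique next edge: there is exactly one edge (β,γ) such that (α,β,γ) is a thread. Consequently, every 4-regular plane graph has a unique threaded circuit partition. -/
/-!
A combinatorial map ("plane graph" via rotation system): `D` is the set of darts
(edge-ends); `rot` is the counterclockwise rotation of darts around their vertex
(vertices are `rot`-orbits); `inv` pairs the two darts of each edge
(edges are `inv`-orbits, of size 2).
-/
structure CombMap (D : Type) [Fintype D] [DecidableEq D] where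
  rot : Equiv.Perm D
  inv : Equiv.Perm D
  inv_invol : ∀ d, inv (inv d) = d
  inv_ne : ∀ d, inv d ≠ d

namespace CombMap

variable {D : Type} [Fintype D] [DecidableEq D] (M : CombMap D)

/-- Every vertex has degree 4: each `rot`-orbit has size exactly 4. -/
def FourRegular : Prop :=
  (∀ d, M.rot (M.rot (M.rot (M.rot d))) = d) ∧ (∀ d, M.rot d ≠ d) ∧
    (∀ d, M.rot (M.rot d) ≠ d)

/-- `IsThread d e`: the length-two path consisting of the edge of dart `d`
(traversed from the vertex of `d` to the vertex of `inv d`, the midpoint)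
followed by the edge of dart `e` is a thread: `e` is a dart at the midpoint and
the two edges are not contiguous in the rotation at the midpoint. -/
def IsThread (d e : D) : Prop :=
  M.rot.SameCycle (M.inv d) e ∧ e ≠ M.inv d ∧ e ≠ M.rot (M.inv d) ∧
    M.rot e ≠ M.inv d

/-- Traversing the edge of dart `d` and continuing straight through the vertex
at its far end: the unique continuation of a threaded circuit. -/
def threadStep (d : D) : D := M.rot (M.rot (M.inv d))

/-- A set of darts closed under continuing along threads and under reversal:
closed unions of (undirected) threaded circuits. -/
def ClosedTC (s : Set D) : Prop := ∀ x ∈ s, M.threadStep x ∈ s ∧ M.inv x ∈ s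

/-- The set of darts of a single (undirected) threaded circuit: a minimal
nonempty set of darts closed under thread-continuation and reversal. -/
def Circuit (s : Set D) : Prop :=
  s.Nonempty ∧ M.ClosedTC s ∧ ∀ t ⊆ s, t.Nonempty → M.ClosedTC t → t = s

/-- The number of circuits in the threaded circuit partition. -/
noncomputable def circuitCount : ℕ := Set.ncard {s : Set D | M.Circuit s}

/-- Reachability between darts by walking along edges and around vertices,
avoiding the darts in `A`. -/
def ReachAvoiding (A : Set D) (a b : D) : Prop :=
  Relation.ReflTransGen
    (fun x y => (y = M.rot x ∨ y = M.inv x) ∧ x ∉ A ∧ y ∉ A) a b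

/-- The graph is connected. -/
def Connected : Prop := ∀ a b : D, M.ReachAvoiding ∅ a b

/-- Number of vertices: the number of `rot`-orbits. -/
noncomputable def vertexCount : ℕ :=
  Set.ncard {s : Set D | ∃ d, s = {e | M.rot.SameCycle d e}}

/-- Number of edges: the number of `inv`-orbits. -/
noncomputable def edgeCount : ℕ :=
  Set.ncard {s : Set D | ∃ d, s = {e | M.inv.SameCycle d e}}

/-- Number of faces: the number of orbits of the face permutation `rot ∘ inv`. -/
noncomputable def faceCount : ℕ :=
  Set.ncard {s : Set D | ∃ d, s = {e | (M.rot * M.inv).SameCycle d e}}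

/-- The embedding is planar (genus 0): Euler's formula `V - E + F = 2` holds. -/
def EulerPlanar : Prop :=
  (M.vertexCount : ℤ) - (M.edgeCount : ℤ) + (M.faceCount : ℤ) = 2

end CombMap


namespace CombMap
variable {D : Type} [Fintype D] [DecidableEq D] (M : CombMap D)

lemma thread_iff (h4 : M.FourRegular) (d e : D) :
    M.IsThread d e ↔ e = M.rot (M.rot (M.inv d)) := by
  obtain ⟨h1, h2, h3⟩ := h4
  constructor
  · rintro ⟨⟨n, hn⟩, hne1, hne2, hne3⟩
    have hr4 : M.rot ^ (4 : ℕ) = 1 := by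
      ext x
      simp [pow_succ, h1]
    have key : M.rot ^ n = M.rot ^ (n % 4) := by
      conv_lhs => rw [← Int.emod_add_mul_ediv n 4]
      rw [zpow_add, zpow_mul]
      rw [show ((4:ℤ)) = ((4:ℕ):ℤ) by norm_num, zpow_natCast, hr4, one_zpow, mul_one]
    have h0 : 0 ≤ n % 4 := Int.emod_nonneg n (by norm_num)
    have hlt : n % 4 < 4 := Int.emod_lt_of_pos n (by norm_num)
    rw [key] at hn
    interval_cases h : n % 4
    · simp at hn; exact absurd hn.symm hne1
    · simp at hn; exact absurd hn.symm hne2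
    · rw [show (2:ℤ) = ((2:ℕ):ℤ) by norm_num, zpow_natCast] at hn
      simp [pow_succ, Equiv.Perm.mul_apply] at hn
      exact hn.symm
    · rw [show (3:ℤ) = ((3:ℕ):ℤ) by norm_num, zpow_natCast] at hn
      simp [pow_succ, Equiv.Perm.mul_apply] at hn
      exact absurd (hn ▸ h1 (M.inv d)) hne3
  · rintro rfl
    refine ⟨⟨2, ?_⟩, h3 _, fun h => h2 _ (M.rot.injective h), fun h => h2 (M.inv d) ?_⟩
    · rw [show (2:ℤ) = ((2:ℕ):ℤ) by norm_num, zpow_natCast]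
      simp [pow_succ, Equiv.Perm.mul_apply]
    · have := congrArg M.rot h
      rw [h1] at this
      exact this.symm

lemma thread_self (h4 : M.FourRegular) (d : D) :
    M.IsThread d ((M.rot * M.rot * M.inv) d) := by
  rw [thread_iff M h4]
  simp [Equiv.Perm.mul_apply]

lemma reach_pow (h4 : M.FourRegular) (n : ℕ) (x : D) :
    Relation.ReflTransGen M.IsThread x (((M.rot * M.rot * M.inv) ^ n) x) := by
  induction n with
  | zero => simpa using Relation.ReflTransGen.refl
  | succ k ih =>
      refine ih.tail ?_
      rw [pow_succ', Equiv.Perm.mul_apply]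
      exact thread_self M h4 _

lemma reach_symm (h4 : M.FourRegular) {a b : D}
    (h : Relation.ReflTransGen M.IsThread a b) :
    Relation.ReflTransGen M.IsThread b a := by
  set f : Equiv.Perm D := M.rot * M.rot * M.inv with hf
  induction h with
  | refl => exact .refl
  | tail hab hbc ih =>
      rename_i b c
      refine Relation.ReflTransGen.trans ?_ ih
      rw [thread_iff M h4] at hbc
      have hb : b = (f ^ (orderOf f - 1)) c := by
        have hc : c = f b := by rw [hbc]; simp [hf, Equiv.Perm.mul_apply]
        rw [hc, ← Equiv.Perm.mul_apply, ← pow_succ,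
          Nat.sub_add_cancel (orderOf_pos f), pow_orderOf_eq_one]
        rfl
      rw [hb]
      exact reach_pow M h4 _ c

end CombMap

/-- In a 4-regular plane graph (rotation system), every edge
(given as a dart `d` traversed toward the midpoint `inv d`) has a unique next
edge, i.e. a unique dart `e` such that the path `(d, e)` is a thread.
Consequently, there is a unique threaded circuit partition: a unique partition
of the darts into threaded circuits (nonempty sets closed under the
thread-successor relation on which the relation is transitive). -/
theorem unique_next_edge_and_unique_threaded_circuit_partition
    {D : Type} [Fintype D] [DecidableEq D] (M : CombMap D)
    (h4 : M.FourRegular) :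
    (∀ d : D, ∃! e : D, M.IsThread d e) ∧
      ∃! P : Set (Set D),
        (∀ s ∈ P, s.Nonempty ∧ (∀ d ∈ s, ∀ e, M.IsThread d e → e ∈ s) ∧
          ∀ d ∈ s, ∀ e ∈ s, Relation.ReflTransGen M.IsThread d e) ∧
        ∀ d : D, ∃! s, s ∈ P ∧ d ∈ s := by
  have hiff := M.thread_iff h4
  constructor
  · intro d
    exact ⟨M.rot (M.rot (M.inv d)), (hiff d _).mpr rfl, fun e he => (hiff d e).mp he⟩
  · set orb : D → Set D := fun d => {e | Relation.ReflTransGen M.IsThread d e} with horb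
    have mem_orb_self : ∀ d, d ∈ orb d := fun d => Relation.ReflTransGen.refl
    have orb_eq : ∀ d e, e ∈ orb d → orb e = orb d := by
      intro d e he
      ext x
      constructor
      · intro hx; exact Relation.ReflTransGen.trans he hx
      · intro hx; exact Relation.ReflTransGen.trans (M.reach_symm h4 he) hx
    refine ⟨{s | ∃ d, s = orb d}, ⟨?_, ?_⟩, ?_⟩
    · rintro s ⟨d, rfl⟩
      refine ⟨⟨d, mem_orb_self d⟩, fun x hx e hthr => hx.tail hthr, ?_⟩
      intro x hx e he
      exact Relation.ReflTransGen.trans (M.reach_symm h4 hx) he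
    · intro d
      refine ⟨orb d, ⟨⟨d, rfl⟩, mem_orb_self d⟩, ?_⟩
      rintro s ⟨⟨d', rfl⟩, hd⟩
      exact (orb_eq d' d hd).symm
    · rintro P ⟨hP1, hP2⟩
      have key : ∀ s ∈ P, ∀ d ∈ s, s = orb d := by
        intro s hs d hd
        obtain ⟨-, hcl, hconn⟩ := hP1 s hs
        apply Set.Subset.antisymm
        · intro e he; exact hconn d hd e he
        · intro e he
          induction he with
          | refl => exact hd
          | tail _ h ih => exact hcl _ ih _ h
      ext s
      constructor
      · intro hs
        obtain ⟨⟨d, hd⟩, -, -⟩ := hP1 s hs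
        exact ⟨d, key s hs d hd⟩
      · rintro ⟨d, rfl⟩
        obtain ⟨t, ⟨htP, htd⟩, -⟩ := hP2 d
        rw [← key t htP d htd]
        exact htP
end

section
/- The threaded circuit partition of a 4-regular plane graph admits a consistent alternating under-over assignment: an assignment of ±1 to each thread such that the two threads at each vertex receive opposite values, and consecutive threads along each threaded circuit receive opposite values. -/
/-!
A consistent alternating assignment is the same as a sign `u` on darts with `u ∘ rot = -u` and
`u ∘ inv = -u`; in a connected map it exists iff the bipartite double cover (darts `D × Bool`,
with `rot` and `inv` lifted so as to also switch the sheet) is disconnected. If the cover of a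
4-regular plane map with `n` darts were connected, it would be a connected map with `2V`
vertices (vertex cycles have even length), `2F` faces (faces stay on their sheet) and
`n = 2E` edges, so of Euler characteristic `2 (V - E + F) = 4`. But every connected hypermap
`(σ, τ)` on `n` points satisfies `c(σ) + c(τ) + c(στ) ≤ n + 2`: inducting on `σ`, the
transposition splitting a cycle of `σ` changes `c(στ)` by one and merges at most two orbits.
-/

open Function Relation

namespace Relation

variable {α : Type*} {r s : α → α → Prop}

def eqvClasses (r : α → α → Prop) : Set (Set α) := {c | ∃ x, c = {y | r x y}}

noncomputable def classCount (r : α → α → Prop) : ℕ := (eqvClasses r).ncard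

theorem setOf_eq_setOf_iff (hr : Equivalence r) {x x' : α} :
    {y | r x y} = {y | r x' y} ↔ r x x' :=
  ⟨fun h => (h ▸ hr.refl x' : x' ∈ {y | r x y}),
    fun h => Set.ext fun _ => ⟨hr.trans (hr.symm h), hr.trans h⟩⟩

theorem classCount_eq_card : classCount (α := α) (· = ·) = Nat.card α := by
  have : eqvClasses (α := α) (· = ·) = Set.range ({·}) := by
    ext c
    refine ⟨fun ⟨x, hx⟩ => ⟨x, ?_⟩, fun ⟨x, hx⟩ => ⟨x, ?_⟩⟩ <;> simp [hx]
  rw [classCount, this, Set.ncard_range_of_injective Set.singleton_injective]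

theorem classCount_le_one (h : ∀ x y, r x y) : classCount r ≤ 1 := by
  unfold classCount
  have : eqvClasses r ⊆ {Set.univ} := by
    rintro _ ⟨x, rfl⟩
    exact Set.eq_univ_of_forall (h x)
  simpa using Set.ncard_le_ncard this

noncomputable def classRep (c : eqvClasses r) : α := c.2.choose

theorem eq_setOf_classRep (c : eqvClasses r) : (c : Set α) = {y | r (classRep c) y} :=
  c.2.choose_spec

theorem two_mul_classCount_le_classCount [Finite α] {r' : α × Bool → α × Bool → Prop}
    (hr : Equivalence r) (hr' : Equivalence r') (hproj : ∀ p q, r' p q → r p.1 q.1)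
    (hsep : ∀ x, ¬ r' (x, false) (x, true)) : 2 * classCount r ≤ classCount r' := by
  let g : eqvClasses r × Bool → eqvClasses r' := fun cb => ⟨_, (classRep cb.1, cb.2), rfl⟩
  have hg : Injective g := by
    rintro ⟨c, b⟩ ⟨c', b'⟩ h
    have hrel : r' (classRep c, b) (classRep c', b') :=
      (setOf_eq_setOf_iff hr').1 (congrArg Subtype.val h)
    obtain rfl : c = c' := Subtype.ext <| by
      rw [eq_setOf_classRep c, eq_setOf_classRep c', setOf_eq_setOf_iff hr]
      exact hproj _ _ hrel
    cases b <;> cases b'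
    exacts [rfl, absurd hrel (hsep _), absurd (hr'.symm hrel) (hsep _), rfl]
  calc 2 * classCount r = Nat.card (eqvClasses r × Bool) := by simp [classCount, mul_comm]
    _ ≤ classCount r' := Nat.card_le_card_of_injective g hg

theorem card_le_two_mul_classCount [Finite α] (hr : Equivalence r) (f : α → α)
    (hf : ∀ x y, r x y → y = x ∨ y = f x) : Nat.card α ≤ 2 * classCount r := by
  let g : eqvClasses r × Bool → α := fun cb => cond cb.2 (f (classRep cb.1)) (classRep cb.1)
  have hg : Surjective g := by
    intro y
    let c : eqvClasses r := ⟨_, y, rfl⟩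
    have hy : r (classRep c) y := hr.symm ((setOf_eq_setOf_iff hr).1 (eq_setOf_classRep c))
    rcases hf _ _ hy with h | h
    · exact ⟨(c, false), h.symm⟩
    · exact ⟨(c, true), h.symm⟩
  calc Nat.card α ≤ Nat.card (eqvClasses r × Bool) := Nat.card_le_card_of_surjective g hg
    _ = 2 * classCount r := by simp [classCount, mul_comm]


def mergeRel (r : α → α → Prop) (a b : α) (x y : α) : Prop :=
  r x y ∨ (r x a ∨ r x b) ∧ (r y a ∨ r y b)

theorem mergeRel_le {a b : α} (hs : Equivalence s) (hrs : r ≤ s) (hab : s a b) :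
    mergeRel r a b ≤ s := by
  have hxab : ∀ {x}, r x a ∨ r x b → s x a :=
    fun h => h.elim (hrs _ _) fun h => hs.trans (hrs _ _ h) (hs.symm hab)
  rintro x y (h | ⟨hx, hy⟩)
  exacts [hrs _ _ h, hs.trans (hxab hx) (hs.symm (hxab hy))]

theorem setOf_mergeRel_of_not_rel {a b x : α} (hx : ¬ (r x a ∨ r x b)) :
    {y | mergeRel r a b x y} = {y | r x y} := by
  simp [mergeRel, hx]

section mergeRel

variable (hr : Equivalence r) {a b : α}
include hr

theorem mergeRel_equivalence : Equivalence (mergeRel r a b) where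
  refl x := .inl (hr.refl x)
  symm := by
    rintro x y (h | ⟨hx, hy⟩)
    exacts [.inl (hr.symm h), .inr ⟨hy, hx⟩]
  trans := by
    rintro x y z (h | ⟨hx, hy⟩) (h' | ⟨hy', hz⟩)
    · exact .inl (hr.trans h h')
    · exact .inr ⟨hy'.imp (hr.trans h) (hr.trans h), hz⟩
    · exact .inr ⟨hx, hy.imp (hr.trans (hr.symm h')) (hr.trans (hr.symm h'))⟩
    · exact .inr ⟨hx, hz⟩

theorem mergeRel_self : mergeRel r a b a b := .inr ⟨.inl (hr.refl a), .inr (hr.refl b)⟩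

theorem mergeRel_eq_self (hab : r a b) : mergeRel r a b = r :=
  le_antisymm (mergeRel_le hr le_rfl hab) fun _ _ => .inl

theorem setOf_mem_pair_iff {x : α} :
    {y | r x y} ∈ ({{y | r a y}, {y | r b y}} : Set (Set α)) ↔ r x a ∨ r x b := by
  simp only [Set.mem_insert_iff, Set.mem_singleton_iff, setOf_eq_setOf_iff hr]

theorem setOf_mergeRel_of_rel {x : α} (hx : r x a ∨ r x b) :
    {y | mergeRel r a b x y} = {y | r a y} ∪ {y | r b y} := by
  ext y
  have hy : mergeRel r a b x y ↔ r y a ∨ r y b :=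
    ⟨fun h => h.elim (fun h => hx.imp (hr.trans (hr.symm h)) (hr.trans (hr.symm h))) And.right,
      fun h => .inr ⟨hx, h⟩⟩
  exact hy.trans (or_congr ⟨hr.symm, hr.symm⟩ ⟨hr.symm, hr.symm⟩)

theorem classCount_mergeRel_add_one [Finite α] (hab : ¬ r a b) :
    classCount (mergeRel r a b) + 1 = classCount r := by
  set A := {y | r a y}
  set B := {y | r b y}
  have hAB : A ≠ B := fun h => hab ((setOf_eq_setOf_iff hr).1 h)
  have hclasses : eqvClasses (mergeRel r a b) = insert (A ∪ B) (eqvClasses r \ {A, B}) := by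
    ext c
    constructor
    · rintro ⟨x, rfl⟩
      by_cases hx : r x a ∨ r x b
      · exact .inl (setOf_mergeRel_of_rel hr hx)
      · rw [setOf_mergeRel_of_not_rel hx]
        exact .inr ⟨⟨x, rfl⟩, mt (setOf_mem_pair_iff hr).1 hx⟩
    · rintro (rfl | ⟨⟨x, rfl⟩, hx⟩)
      · exact ⟨a, (setOf_mergeRel_of_rel hr (.inl (hr.refl a))).symm⟩
      · exact ⟨x, (setOf_mergeRel_of_not_rel (mt (setOf_mem_pair_iff hr).2 hx)).symm⟩
  have hnotMem : A ∪ B ∉ eqvClasses r \ {A, B} := by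
    rintro ⟨⟨x, hx⟩, hne⟩
    have hxa : r x a := (hx ▸ Set.mem_union_left B (hr.refl a) : a ∈ {y | r x y})
    exact hne (hx ▸ (setOf_mem_pair_iff hr).2 (.inl hxa))
  have hsub : {A, B} ⊆ eqvClasses r :=
    Set.insert_subset ⟨a, rfl⟩ (Set.singleton_subset_iff.2 ⟨b, rfl⟩)
  have h2 : 2 ≤ (eqvClasses r).ncard := Set.ncard_pair hAB ▸ Set.ncard_le_ncard hsub
  rw [classCount, classCount, hclasses, Set.ncard_insert_of_notMem hnotMem,
    Set.ncard_sdiff hsub, Set.ncard_pair hAB]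
  omega

end mergeRel

end Relation

namespace Equiv.Perm

variable {α : Type*}

theorem rel_swap_apply [DecidableEq α] {s : α → α → Prop} (hs : Equivalence s) {a b : α}
    (hab : s a b) (x : α) : s x (swap a b x) := by
  rw [swap_apply_def]
  split_ifs with ha hb
  exacts [ha ▸ hab, hb ▸ hs.symm hab, hs.refl x]

theorem SameCycle.rel_of_forall [Finite α] {π : Perm α} {s : α → α → Prop}
    (hs : Equivalence s) (h : ∀ x, s x (π x)) {x y : α} (hxy : π.SameCycle x y) : s x y := by
  obtain ⟨n, rfl⟩ := hxy.exists_nat_pow_eq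
  clear hxy
  induction n with
  | zero => exact hs.refl x
  | succ n ih => exact hs.trans ih (by rw [pow_succ', mul_apply]; exact h _)

theorem sameCycle_of_pow_apply_eq {π : Perm α} {x y : α} {n : ℕ} (h : (π ^ n) x = y) :
    π.SameCycle x y :=
  h ▸ sameCycle_pow_right.2 (SameCycle.refl _ _)

theorem not_sameCycle_of_pow_apply_self [Finite α] {π : Perm α} {x y : α} {n : ℕ} (hn : 0 < n)
    (hper : (π ^ n) x = x) (hy : ∀ j < n, (π ^ j) x ≠ y) : ¬ π.SameCycle x y := by
  intro hxy
  obtain ⟨i, hi⟩ := hxy.exists_nat_pow_eq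
  have hper' : IsPeriodicPt π n x := by rwa [IsPeriodicPt, IsFixedPt, iterate_eq_pow]
  have := hper'.iterate_mod_apply i
  rw [iterate_eq_pow, iterate_eq_pow] at this
  exact hy _ (Nat.mod_lt i hn) (this.trans hi)

section swap

variable [DecidableEq α]

theorem swap_mul_pow_apply_eq {π : Perm α} {a b : α} {m : ℕ}
    (h : ∀ j, 0 < j → j ≤ m → (π ^ j) b ≠ a ∧ (π ^ j) b ≠ b) :
    ((swap a b * π) ^ m) b = (π ^ m) b := by
  induction m with
  | zero => rfl
  | succ m ih =>
    rw [pow_succ', mul_apply, mul_apply, ih fun j hj hjm => h j hj (by omega), ← mul_apply π,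
      ← pow_succ']
    exact swap_apply_of_ne_of_ne (h _ m.succ_pos le_rfl).1 (h _ m.succ_pos le_rfl).2

theorem swap_mul_pow_succ_apply {π : Perm α} {a b : α} {m : ℕ}
    (h : ∀ j, 0 < j → j ≤ m → (π ^ j) b ≠ a ∧ (π ^ j) b ≠ b) :
    ((swap a b * π) ^ (m + 1)) b = swap a b ((π ^ (m + 1)) b) := by
  rw [pow_succ', mul_apply, mul_apply, swap_mul_pow_apply_eq h, ← mul_apply π, ← pow_succ']

variable [Finite α]

theorem sameCycle_swap_mul_le {π : Perm α} {s : α → α → Prop} (hs : Equivalence s)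
    (h : ∀ x, s x (π x)) {a b : α} (hab : s a b) : (swap a b * π).SameCycle ≤ s :=
  fun _ _ => SameCycle.rel_of_forall hs fun x => hs.trans (h x) (rel_swap_apply hs hab _)

theorem sameCycle_swap_mul_of_not_sameCycle {π : Perm α} {a b : α} (hab : ¬ π.SameCycle a b) :
    (swap a b * π).SameCycle a b := by
  classical
  have hret : ∃ m, (π ^ (m + 1)) b = b :=
    ⟨orderOf π - 1, by rw [Nat.sub_add_cancel (orderOf_pos π), pow_orderOf_eq_one]; rfl⟩
  set m := Nat.find hret
  -- `b` first returns to itself at time `m + 1` without meeting `a`; the swap sends it to `a`.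
  have h : ∀ j, 0 < j → j ≤ m → (π ^ j) b ≠ a ∧ (π ^ j) b ≠ b := fun j hj hjm =>
    ⟨fun hja => hab (sameCycle_of_pow_apply_eq hja).symm,
      fun hjb => Nat.find_min hret (m := j - 1) (by omega) (by rwa [Nat.sub_add_cancel hj])⟩
  refine (sameCycle_of_pow_apply_eq (n := m + 1) ?_).symm
  rw [swap_mul_pow_succ_apply h, Nat.find_spec hret, swap_apply_right]

theorem not_sameCycle_swap_mul_of_sameCycle {π : Perm α} {a b : α} (hne : a ≠ b)
    (hab : π.SameCycle a b) : ¬ (swap a b * π).SameCycle a b := by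
  classical
  have hreach : ∃ m, (π ^ (m + 1)) b = a := by
    obtain ⟨i, hi⟩ := hab.symm.exists_nat_pow_eq
    refine ⟨i - 1, ?_⟩
    rwa [Nat.sub_add_cancel (Nat.pos_of_ne_zero fun h0 => hne (by simp_all))]
  set m := Nat.find hreach
  -- Up to time `m + 1`, when `b` first meets `a`, the orbit of `b` avoids `a` and `b`; the swap
  -- closes it up at that time, so the new cycle of `b` misses `a`.
  have h : ∀ j, 0 < j → j ≤ m → (π ^ j) b ≠ a ∧ (π ^ j) b ≠ b := by
    refine fun j hj hjm => ⟨fun hja => Nat.find_min hreach (m := j - 1) (by omega)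
      (by rwa [Nat.sub_add_cancel hj]), fun hjb => Nat.find_min hreach (m := m - j) (by omega) ?_⟩
    calc (π ^ (m - j + 1)) b = (π ^ (m - j + 1)) ((π ^ j) b) := by rw [hjb]
      _ = (π ^ (m + 1)) b := by
        rw [← mul_apply, ← pow_add, show m - j + 1 + j = m + 1 by omega]
      _ = a := Nat.find_spec hreach
  refine fun hρ => not_sameCycle_of_pow_apply_self m.succ_pos ?_ (fun j hj => ?_) hρ.symm
  · rw [swap_mul_pow_succ_apply h, Nat.find_spec hreach, swap_apply_left]
  · rcases Nat.eq_zero_or_pos j with rfl | hj0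
    · exact hne.symm
    · rw [swap_mul_pow_apply_eq fun i hi hij => h i hi (by omega)]
      exact (h j hj0 (by omega)).1

/-- Fixed points count as cycles. `CombMap.vertexCount`, `edgeCount` and `faceCount` are by
definition the cycle counts of `rot`, `inv` and `rot * inv`. -/
noncomputable def cycleCount (π : Perm α) : ℕ := classCount π.SameCycle

theorem sameCycle_swap_mul_eq_mergeRel {π : Perm α} {a b : α} (hab : ¬ π.SameCycle a b) :
    (swap a b * π).SameCycle = mergeRel π.SameCycle a b := by
  have hρ := sameCycle_swap_mul_of_not_sameCycle hab
  refine le_antisymm (sameCycle_swap_mul_le (mergeRel_equivalence (SameCycle.equivalence _))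
    (fun _ => .inl SameCycle.rfl.apply_right) (mergeRel_self (SameCycle.equivalence _)))
    (mergeRel_le (SameCycle.equivalence _) ?_ hρ)
  conv_lhs => rw [← swap_mul_self_mul a b π]
  exact sameCycle_swap_mul_le (SameCycle.equivalence _) (fun _ => SameCycle.rfl.apply_right) hρ

theorem cycleCount_swap_mul_add_one {π : Perm α} {a b : α} (hab : ¬ π.SameCycle a b) :
    cycleCount (swap a b * π) + 1 = cycleCount π := by
  rw [cycleCount, sameCycle_swap_mul_eq_mergeRel hab]
  exact classCount_mergeRel_add_one (SameCycle.equivalence _) hab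

theorem cycleCount_swap_mul {π : Perm α} {a b : α} (hne : a ≠ b) (hab : π.SameCycle a b) :
    cycleCount (swap a b * π) = cycleCount π + 1 := by
  have h := cycleCount_swap_mul_add_one (not_sameCycle_swap_mul_of_sameCycle hne hab)
  rwa [swap_mul_self_mul, eq_comm] at h

theorem cycleCount_swap_mul_le (π : Perm α) (a b : α) :
    cycleCount (swap a b * π) ≤ cycleCount π + 1 := by
  rcases eq_or_ne a b with rfl | hne
  · rw [swap_self, ← one_def, one_mul]
    omega
  by_cases hab : π.SameCycle a b
  · exact (cycleCount_swap_mul hne hab).le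
  · have := cycleCount_swap_mul_add_one hab
    omega

end swap

def SameOrbit (σ τ : Perm α) : α → α → Prop := EqvGen fun x y => y = σ x ∨ y = τ x

section SameOrbit

variable {σ τ : Perm α}

theorem sameOrbit_equivalence : Equivalence (SameOrbit σ τ) := EqvGen.is_equivalence _

theorem sameOrbit_apply_left (x : α) : SameOrbit σ τ x (σ x) := EqvGen.rel _ _ (.inl rfl)

theorem sameOrbit_apply_right (x : α) : SameOrbit σ τ x (τ x) := EqvGen.rel _ _ (.inr rfl)

theorem sameOrbit_le {s : α → α → Prop} (hs : Equivalence s) (hσ : ∀ x, s x (σ x))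
    (hτ : ∀ x, s x (τ x)) : SameOrbit σ τ ≤ s := fun x y h =>
  hs.eqvGen_iff.1 (EqvGen.mono (fun x _ h => h.elim (· ▸ hσ x) (· ▸ hτ x)) x y h)

theorem sameOrbit_eq_mergeRel [DecidableEq α] (σ τ : Perm α) (a : α) :
    SameOrbit σ τ = mergeRel (SameOrbit (swap a (σ a) * σ) τ) a (σ a) := by
  have hE := sameOrbit_equivalence (σ := σ) (τ := τ)
  have hE₁ := sameOrbit_equivalence (σ := swap a (σ a) * σ) (τ := τ)
  have hM := mergeRel_equivalence (a := a) (b := σ a) hE₁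
  refine le_antisymm (sameOrbit_le hM (fun x => ?_) fun x => .inl (sameOrbit_apply_right x))
    (mergeRel_le hE (sameOrbit_le hE (fun x => ?_) sameOrbit_apply_right) (sameOrbit_apply_left a))
  · conv_rhs => rw [← swap_mul_self_mul a (σ a) σ]
    exact hM.trans (.inl (sameOrbit_apply_left x)) (rel_swap_apply hM (mergeRel_self hE₁) _)
  · exact hE.trans (sameOrbit_apply_left x) (rel_swap_apply hE (sameOrbit_apply_left a) _)

variable [Finite α]

theorem sameCycle_mul_le_sameOrbit : (σ * τ).SameCycle ≤ SameOrbit σ τ := fun _ _ =>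
  SameCycle.rel_of_forall sameOrbit_equivalence fun x =>
    sameOrbit_equivalence.trans (sameOrbit_apply_right x) (sameOrbit_apply_left (τ x))

theorem sameOrbit_one_left : SameOrbit 1 τ = τ.SameCycle :=
  le_antisymm (sameOrbit_le (SameCycle.equivalence _) (fun _ => SameCycle.rfl)
    fun _ => SameCycle.rfl.apply_right)
    fun _ _ => SameCycle.rel_of_forall sameOrbit_equivalence sameOrbit_apply_right

end SameOrbit

theorem cycleCount_one [Finite α] : cycleCount (1 : Perm α) = Nat.card α := by
  have : (1 : Perm α).SameCycle = (· = ·) := by ext; exact sameCycle_one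
  rw [cycleCount, this, classCount_eq_card]

section genus

variable [Fintype α] [DecidableEq α]

theorem cycleCount_add_cycleCount_mul_add_le_swap_mul (σ τ : Perm α) {a : α} (ha : σ a ≠ a) :
    cycleCount σ + cycleCount (σ * τ) + 2 * classCount (SameOrbit (swap a (σ a) * σ) τ) ≤
      cycleCount (swap a (σ a) * σ) + cycleCount (swap a (σ a) * σ * τ) +
        2 * classCount (SameOrbit σ τ) := by
  set b := σ a
  set σ₁ := swap a b * σ
  have hσ₁ : cycleCount σ₁ = cycleCount σ + 1 :=
    cycleCount_swap_mul (Ne.symm ha) SameCycle.rfl.apply_right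
  have hmul : σ * τ = swap a b * (σ₁ * τ) := by rw [← mul_assoc, swap_mul_self_mul]
  have horb : SameOrbit σ τ = mergeRel (SameOrbit σ₁ τ) a b := sameOrbit_eq_mergeRel σ τ a
  rw [horb, hmul]
  by_cases hab : SameOrbit σ₁ τ a b
  · rw [mergeRel_eq_self sameOrbit_equivalence hab]
    have := cycleCount_swap_mul_le (σ₁ * τ) a b
    omega
  · have hcount := classCount_mergeRel_add_one sameOrbit_equivalence hab
    have hmul₁ := cycleCount_swap_mul_add_one fun h => hab (sameCycle_mul_le_sameOrbit _ _ h)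
    omega

/-- The genus of the hypermap `(σ, τ)` is nonnegative. -/
theorem cycleCount_add_cycleCount_add_cycleCount_mul_le (σ τ : Perm α) :
    cycleCount σ + cycleCount τ + cycleCount (σ * τ) ≤
      Nat.card α + 2 * classCount (SameOrbit σ τ) := by
  induction hn : σ.support.card using Nat.strong_induction_on generalizing σ with
  | _ n ih =>
    by_cases hσ : σ = 1
    · subst hσ
      rw [cycleCount_one, one_mul, sameOrbit_one_left, cycleCount]
      omega
    · obtain ⟨a, ha⟩ : ∃ a, σ a ≠ a := not_forall.1 fun h => hσ (ext h)
      have := ih _ (hn ▸ card_support_swap_mul ha) _ rfl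
      have := cycleCount_add_cycleCount_mul_add_le_swap_mul σ τ ha
      omega

end genus

def bipartiteLift (π : Perm α) : Perm (α × Bool) where
  toFun p := (π p.1, !p.2)
  invFun p := (π.symm p.1, !p.2)
  left_inv p := by simp
  right_inv p := by simp

@[simp]
theorem bipartiteLift_apply (π : Perm α) (p : α × Bool) : bipartiteLift π p = (π p.1, !p.2) :=
  rfl

theorem bipartiteLift_pow_apply (π : Perm α) (n : ℕ) (x : α) (b : Bool) :
    (bipartiteLift π ^ n) (x, b) = ((π ^ n) x, if Even n then b else !b) := by
  induction n with
  | zero => simp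
  | succ n ih =>
    rw [pow_succ', mul_apply, ih, bipartiteLift_apply, pow_succ', mul_apply]
    by_cases hn : Even n <;> simp [hn, Nat.even_add_one]

section cover

variable [Finite α]

theorem not_sameCycle_bipartiteLift {π : Perm α} {x : α} (h : ∀ n, (π ^ n) x = x → Even n) :
    ¬ (bipartiteLift π).SameCycle (x, false) (x, true) := by
  intro hx
  obtain ⟨n, hn⟩ := hx.exists_nat_pow_eq
  rw [bipartiteLift_pow_apply, Prod.mk.injEq] at hn
  simp [h n hn.1] at hn

theorem two_mul_cycleCount_le_of_lift (φ : Perm α) (φ' : Perm (α × Bool))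
    (hlift : ∀ p, (φ' p).1 = φ p.1) (hsep : ∀ x, ¬ φ'.SameCycle (x, false) (x, true)) :
    2 * cycleCount φ ≤ cycleCount φ' :=
  two_mul_classCount_le_classCount (SameCycle.equivalence _) (SameCycle.equivalence _)
    (fun _ _ => SameCycle.rel_of_forall (InvImage.equivalence _ Prod.fst (SameCycle.equivalence φ))
      fun p => show φ.SameCycle p.1 (φ' p).1 by rw [hlift]; exact SameCycle.rfl.apply_right)
    hsep

theorem SameCycle.eq_or_eq_of_involutive {π : Perm α} (h : ∀ x, π (π x) = x) {x y : α}
    (hxy : π.SameCycle x y) : y = x ∨ y = π x := by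
  obtain ⟨n, rfl⟩ := hxy.exists_nat_pow_eq
  induction n with
  | zero => exact .inl _root_.rfl
  | succ n ih =>
    rw [pow_succ', mul_apply]
    rcases ih (sameCycle_of_pow_apply_eq _root_.rfl) with hn | hn <;> rw [hn]
    exacts [.inr _root_.rfl, .inl (h x)]

theorem card_le_two_mul_cycleCount {π : Perm α} (h : ∀ x, π (π x) = x) :
    Nat.card α ≤ 2 * cycleCount π :=
  card_le_two_mul_classCount (SameCycle.equivalence _) π fun _ _ =>
    SameCycle.eq_or_eq_of_involutive h

end cover

section coloring

variable {σ τ : Perm α}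

theorem exists_sameOrbit_bipartiteLift {x y : α}
    (h : ReflTransGen (fun x y => y = σ x ∨ y = τ x) x y) :
    ∃ c, SameOrbit (bipartiteLift σ) (bipartiteLift τ) (x, false) (y, c) ∧
      SameOrbit (bipartiteLift σ) (bipartiteLift τ) (x, true) (y, !c) := by
  induction h with
  | refl => exact ⟨false, sameOrbit_equivalence.refl _, sameOrbit_equivalence.refl _⟩
  | tail _ hyz ih =>
    obtain ⟨c, h₁, h₂⟩ := ih
    refine ⟨!c, ?_, ?_⟩ <;> rcases hyz with rfl | rfl
    exacts [sameOrbit_equivalence.trans h₁ (sameOrbit_apply_left _),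
      sameOrbit_equivalence.trans h₁ (sameOrbit_apply_right _),
      sameOrbit_equivalence.trans h₂ (sameOrbit_apply_left _),
      sameOrbit_equivalence.trans h₂ (sameOrbit_apply_right _)]

variable (hconn : ∀ x y, ReflTransGen (fun x y => y = σ x ∨ y = τ x) x y)
include hconn

theorem forall_sameOrbit_bipartiteLift {x : α}
    (hx : SameOrbit (bipartiteLift σ) (bipartiteLift τ) (x, false) (x, true)) :
    ∀ p q, SameOrbit (bipartiteLift σ) (bipartiteLift τ) p q := by
  have hE := sameOrbit_equivalence (σ := bipartiteLift σ) (τ := bipartiteLift τ)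
  suffices h : ∀ p, SameOrbit (bipartiteLift σ) (bipartiteLift τ) (x, false) p from
    fun p q => hE.trans (hE.symm (h p)) (h q)
  rintro ⟨y, d⟩
  obtain ⟨c, h₁, h₂⟩ := exists_sameOrbit_bipartiteLift (hconn x y)
  cases c <;> cases d
  exacts [h₁, hE.trans hx h₂, hE.trans hx h₂, h₁]

theorem exists_sign_of_not_forall_sameOrbit_bipartiteLift
    (hcov : ¬ ∀ p q, SameOrbit (bipartiteLift σ) (bipartiteLift τ) p q) :
    ∃ u : α → ℤ, (∀ x, u x = 1 ∨ u x = -1) ∧ (∀ x, u (σ x) = -u x) ∧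
      (∀ x, u (τ x) = -u x) := by
  classical
  have hE := sameOrbit_equivalence (σ := bipartiteLift σ) (τ := bipartiteLift τ)
  obtain ⟨⟨x₀, -⟩, -⟩ := not_forall.1 hcov
  let A y := SameOrbit (bipartiteLift σ) (bipartiteLift τ) (x₀, false) (y, false)
  have hneighbor : ∀ y z,
      (∀ b, SameOrbit (bipartiteLift σ) (bipartiteLift τ) (y, b) (z, !b)) →
      (A z ↔ ¬ A y) := by
    intro y z hyz
    refine ⟨fun hz hy => hcov (forall_sameOrbit_bipartiteLift hconn
      (hE.trans (hE.trans (hE.symm hy) hz) (hE.symm (hyz true)))), fun hy => ?_⟩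
    obtain ⟨c, h₁, -⟩ := exists_sameOrbit_bipartiteLift (hconn x₀ y)
    cases c
    exacts [absurd h₁ hy, hE.trans h₁ (hyz true)]
  refine ⟨fun y => if A y then 1 else -1, fun y => ?_, fun y => ?_, fun y => ?_⟩
  · by_cases hy : A y <;> simp [hy]
  · by_cases hy : A y <;> simp [hneighbor y (σ y) (fun b => sameOrbit_apply_left (y, b)), hy]
  · by_cases hy : A y <;> simp [hneighbor y (τ y) (fun b => sameOrbit_apply_right (y, b)), hy]

end coloring

end Equiv.Perm

open Equiv.Perm

namespace CombMap

variable {D : Type} [Fintype D] [DecidableEq D] {M : CombMap D}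

theorem FourRegular.even_of_rot_pow_apply_eq (h4 : M.FourRegular) {d : D} {n : ℕ}
    (hn : (M.rot ^ n) d = d) : Even n := by
  have hper : minimalPeriod M.rot d = 2 ^ 2 :=
    minimalPeriod_eq_prime_pow (k := 1) (by simpa [IsPeriodicPt, IsFixedPt] using h4.2.2 d)
      (by simpa [IsPeriodicPt, IsFixedPt] using h4.1 d)
  have hdvd : minimalPeriod M.rot d ∣ n := isPeriodicPt_iff_minimalPeriod_dvd.1 <| by
    rwa [IsPeriodicPt, IsFixedPt, iterate_eq_pow]
  exact even_iff_two_dvd.2 (dvd_trans ⟨2, by rw [hper]; rfl⟩ hdvd)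

theorem not_forall_sameOrbit_bipartiteLift (h4 : M.FourRegular) (hpl : M.EulerPlanar) :
    ¬ ∀ p q, SameOrbit (bipartiteLift M.rot) (bipartiteLift M.inv) p q := by
  intro htot
  have hgenus := cycleCount_add_cycleCount_add_cycleCount_mul_le (bipartiteLift M.rot)
    (bipartiteLift M.inv)
  have horb := classCount_le_one htot
  have hV : 2 * M.vertexCount ≤ cycleCount (bipartiteLift M.rot) :=
    two_mul_cycleCount_le_of_lift _ _ (fun _ => rfl) fun _ =>
      not_sameCycle_bipartiteLift fun _ => h4.even_of_rot_pow_apply_eq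
  have hF : 2 * M.faceCount ≤ cycleCount (bipartiteLift M.rot * bipartiteLift M.inv) :=
    two_mul_cycleCount_le_of_lift (M.rot * M.inv) _ (fun _ => rfl) fun _ h =>
      Bool.false_ne_true (SameCycle.rel_of_forall (InvImage.equivalence _ Prod.snd eq_equivalence)
        (fun _ => by simp [InvImage]) h)
  have hE : Nat.card D ≤ 2 * M.edgeCount := card_le_two_mul_cycleCount M.inv_invol
  have hE' : Nat.card (D × Bool) ≤ 2 * cycleCount (bipartiteLift M.inv) :=
    card_le_two_mul_cycleCount fun _ => by simp [M.inv_invol]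
  rw [Nat.card_prod, Nat.card_eq_fintype_card (α := Bool), Fintype.card_bool] at hgenus hE'
  unfold EulerPlanar at hpl
  omega

end CombMap

/-- A thread with midpoint the vertex of a dart `e` is the opposite pair `{e, rot (rot e)}`,
so an under-over assignment is a map `u` into `{-1, +1}` with
`u (rot (rot e)) = u e`. It is consistent if the two threads at each vertex get
opposite values (`u (rot e) = - u e`), and alternating if the threads used by
consecutive steps of a threaded circuit get opposite values (the step along the
edge of dart `d` uses the thread of `inv d`, and the next step uses the thread
of `inv (threadStep d)`). -/
theorem threaded_partition_has_consistent_alternating_assignment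
    {D : Type} [Fintype D] [DecidableEq D] (M : CombMap D)
    (h4 : M.FourRegular) (hconn : M.Connected) (hpl : M.EulerPlanar) :
    ∃ u : D → ℤ,
      (∀ d, u d = 1 ∨ u d = -1) ∧
      (∀ d, u (M.rot (M.rot d)) = u d) ∧
      (∀ d, u (M.rot d) = - u d) ∧
      (∀ d, u (M.inv (M.threadStep d)) = - u (M.inv d)) := by
  have hconn' : ∀ x y, ReflTransGen (fun x y => y = M.rot x ∨ y = M.inv x) x y :=
    fun x y => ReflTransGen.mono (fun _ _ h => h.1) x y (hconn x y)
  obtain ⟨u, hu, hrot, hinv⟩ := exists_sign_of_not_forall_sameOrbit_bipartiteLift hconn'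
    (M.not_forall_sameOrbit_bipartiteLift h4 hpl)
  have hrot₂ : ∀ d, u (M.rot (M.rot d)) = u d := fun d => by rw [hrot, hrot, neg_neg]
  refine ⟨u, hu, hrot₂, hrot, fun d => ?_⟩
  rw [hinv, CombMap.threadStep, hrot₂]
end

section
/- Let G be a 4-regular plane graph with a cutpoint c. Then all four edges incident with c belong to the same circuit of the threaded circuit partition of G. -/
/-!
Colour each dart by the side of the cut it lies on. Since `inv` pairs darts and `rot ^ 2` pairs
the darts at every vertex other than `c`, any colouring that is invariant under these involutions
away from `c` has an even number of darts of each colour at `c` (a handshake count). So each side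
owns two of the four darts at `c`, and planarity forbids them to be opposite: otherwise the
indicator `z` of the other side has even sum at every vertex, so by Euler's formula it is the
coboundary of an `𝔽₂`-valued potential `u` on the faces, and a handshake count of the darts on
the first side where `u` takes a fixed value is odd. Finally, a set of darts closed under threads
and reversal contains, with a dart `d` at `c`, the opposite dart, and a handshake count of its
darts on the side of `d` shows that it contains the other dart of that side, adjacent to `d`.
-/

open Equiv Equiv.Perm Finset Module

namespace CombMap

variable {D : Type}

section Orbits

variable (π : Perm D)

abbrev Orbits : Type := Quotient (SameCycle.setoid π)

theorem orbits_mk_eq_mk {x y : D} :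
    (Quotient.mk _ x : Orbits π) = Quotient.mk _ y ↔ π.SameCycle x y :=
  Quotient.eq

variable [Fintype D] [DecidableEq D]

instance : DecidableRel (SameCycle.setoid π).r := fun x y =>
  inferInstanceAs (Decidable (π.SameCycle x y))

theorem ncard_orbitSets :
    {s : Set D | ∃ d, s = {e | π.SameCycle d e}}.ncard = Fintype.card (Orbits π) := by
  have hrange : {s : Set D | ∃ d, s = {e | π.SameCycle d e}} =
      Set.range fun d => {e | π.SameCycle d e} := by
    ext s; simp [eq_comm]
  have hker : Setoid.ker (fun d => {e | π.SameCycle d e}) = SameCycle.setoid π := by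
    ext a b
    simp only [Setoid.ker_def, Set.ext_iff, Set.mem_ofPred_eq]
    exact ⟨fun h => (h b).2 (SameCycle.refl π b), fun h e => ⟨h.symm.trans, h.trans⟩⟩
  rw [hrange, ← Nat.card_coe_set_eq, ← Nat.card_congr (Setoid.quotientKerEquivRange _), hker,
    Nat.card_eq_fintype_card]

/-- Cells of the map are orbits of darts (vertices of `rot`, edges of `inv`, faces of
`rot * inv`) and `𝔽₂`-chains are functions on cells; `incidence π ρ` counts mod 2 the darts
that a `π`-cell shares with `ρ`-cells. -/
def incidence (ρ : Perm D) : (Orbits ρ → ZMod 2) →ₗ[ZMod 2] (Orbits π → ZMod 2) where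
  toFun u v := ∑ d with Quotient.mk _ d = v, u (Quotient.mk _ d)
  map_add' u w := by ext v; simp [sum_add_distrib]
  map_smul' c u := by ext v; simp [mul_sum]

theorem incidence_mk (ρ : Perm D) (u : Orbits ρ → ZMod 2) (x : D) :
    incidence π ρ u (Quotient.mk _ x) = ∑ d with π.SameCycle x d, u (Quotient.mk _ d) := by
  simp only [incidence, LinearMap.coe_mk, AddHom.coe_mk, orbits_mk_eq_mk]
  exact sum_congr (filter_congr fun d _ => ⟨SameCycle.symm, SameCycle.symm⟩) fun _ _ => rfl

end Orbits

variable [Fintype D] [DecidableEq D] (M : CombMap D)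

theorem inv_sameCycle_iff {x y : D} : M.inv.SameCycle x y ↔ y = x ∨ y = M.inv x := by
  constructor
  · intro h
    obtain ⟨i, rfl⟩ := h.exists_nat_pow_eq
    have hsq : M.inv ^ 2 = 1 := by ext; simp [sq, M.inv_invol]
    rw [pow_eq_pow_mod i hsq]
    have : i % 2 < 2 := Nat.mod_lt i two_pos
    interval_cases i % 2 <;> simp
  · rintro (rfl | rfl)
    exacts [SameCycle.refl _ _, ⟨1, by simp⟩]

theorem sum_inv_sameCycle {R : Type*} [AddCommMonoid R] (g : D → R) (x : D) :
    ∑ y with M.inv.SameCycle x y, g y = g x + g (M.inv x) := by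
  have : ({y | M.inv.SameCycle x y} : Finset D) = {x, M.inv x} := by
    ext y; simp [inv_sameCycle_iff]
  rw [this, sum_pair (M.inv_ne x).symm]

theorem Connected.apply_eq {M : CombMap D} (hM : M.Connected) {β : Type*} {f : D → β}
    (hrot : ∀ x, f (M.rot x) = f x) (hinv : ∀ x, f (M.inv x) = f x) (a b : D) : f a = f b := by
  induction hM a b with
  | refl => rfl
  | tail _ hstep ih => obtain ⟨rfl | rfl, -⟩ := hstep <;> simp [hrot, hinv, ih]

def edgeBoundary : (Orbits M.inv → ZMod 2) →ₗ[ZMod 2] (Orbits M.rot → ZMod 2) :=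
  incidence M.rot M.inv

def faceBoundary : (Orbits (M.rot * M.inv) → ZMod 2) →ₗ[ZMod 2] (Orbits M.inv → ZMod 2) :=
  incidence M.inv (M.rot * M.inv)

theorem faceBoundary_mk (u : Orbits (M.rot * M.inv) → ZMod 2) (x : D) :
    M.faceBoundary u (Quotient.mk _ x) = u (Quotient.mk _ x) + u (Quotient.mk _ (M.inv x)) := by
  rw [faceBoundary, incidence_mk, sum_inv_sameCycle]

theorem face_mk_inv (x : D) :
    (Quotient.mk _ (M.inv x) : Orbits (M.rot * M.inv)) = Quotient.mk _ (M.rot x) :=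
  Quotient.sound ⟨1, by simp [M.inv_invol]⟩

theorem edgeBoundary_comp_faceBoundary : M.edgeBoundary ∘ₗ M.faceBoundary = 0 := by
  refine LinearMap.ext fun u => funext fun v => ?_
  induction v using Quotient.ind with | _ x => ?_
  have hrot : ∑ d with M.rot.SameCycle x d, u (Quotient.mk _ (M.rot d)) =
      ∑ d with M.rot.SameCycle x d, u (Quotient.mk _ d) :=
    sum_equiv M.rot (fun d => by simp [sameCycle_apply_right]) fun _ _ => rfl
  simp only [LinearMap.comp_apply, edgeBoundary, incidence_mk, faceBoundary_mk, face_mk_inv,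
    sum_add_distrib, hrot, CharTwo.add_self_eq_zero, LinearMap.zero_apply, Pi.zero_apply]

theorem edgeBoundary_single (x : D) :
    M.edgeBoundary (Pi.single (Quotient.mk _ x) 1) =
      Pi.single (Quotient.mk _ x) 1 + Pi.single (Quotient.mk _ (M.inv x)) 1 := by
  funext v
  induction v using Quotient.ind with | _ w => ?_
  have hsplit : ∀ d, (if M.inv.SameCycle d x then (1 : ZMod 2) else 0) =
      (if x = d then 1 else 0) + (if M.inv x = d then 1 else 0) := by
    intro d
    simp only [sameCycle_comm (x := d), inv_sameCycle_iff]
    by_cases h : x = d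
    · subst h; simp [M.inv_ne x]
    · simp [h, Ne.symm h, eq_comm (a := d)]
  simp only [edgeBoundary, incidence_mk, Pi.single_apply, orbits_mk_eq_mk, Pi.add_apply, hsplit,
    sum_add_distrib, sum_ite_eq, mem_filter, mem_univ, true_and]

theorem single_sub_single_mem_range_edgeBoundary (hM : M.Connected) (x y : D) :
    Pi.single (Quotient.mk _ x) 1 - Pi.single (Quotient.mk _ y) 1 ∈
      LinearMap.range M.edgeBoundary := by
  -- the class of a vertex modulo boundaries is invariant along `rot` and `inv`, hence constant
  let f : D → (Orbits M.rot → ZMod 2) ⧸ LinearMap.range M.edgeBoundary :=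
    fun d => Submodule.Quotient.mk (Pi.single (Quotient.mk _ d) 1)
  have hrot : ∀ d, f (M.rot d) = f d := fun d => by
    simp only [f, (orbits_mk_eq_mk M.rot).mpr (sameCycle_apply_left.mpr (SameCycle.refl _ d))]
  have hinv : ∀ d, f (M.inv d) = f d := fun d => by
    refine ((Submodule.Quotient.eq _).mpr
      (LinearMap.mem_range.mpr ⟨Pi.single (Quotient.mk _ d) 1, ?_⟩)).symm
    ext v
    simp [edgeBoundary_single, CharTwo.sub_eq_add]
  exact (Submodule.Quotient.eq _).mp (hM.apply_eq hrot hinv x y)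

theorem card_sub_one_le_finrank_range_edgeBoundary (hM : M.Connected) :
    Fintype.card (Orbits M.rot) - 1 ≤ finrank (ZMod 2) (LinearMap.range M.edgeBoundary) := by
  let ε : (Orbits M.rot → ZMod 2) →ₗ[ZMod 2] ZMod 2 := ∑ v, LinearMap.proj v
  have hker : LinearMap.ker ε ≤ LinearMap.range M.edgeBoundary := by
    intro g hg
    rcases isEmpty_or_nonempty (Orbits M.rot) with hV | hV
    · exact Subsingleton.elim 0 g ▸ zero_mem _
    obtain ⟨x₀⟩ := hV.map Quotient.out
    have hsum : ∑ v, g v = 0 := by simpa [ε] using hg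
    have hg : g = ∑ v, g v • (Pi.single v 1 - Pi.single (Quotient.mk _ x₀) 1) := by
      simpa [smul_sub, sum_sub_distrib, ← sum_smul, hsum] using pi_eq_sum_univ' g
    rw [hg]
    refine sum_mem fun v _ => Submodule.smul_mem _ _ ?_
    induction v using Quotient.ind with
    | _ x => exact M.single_sub_single_mem_range_edgeBoundary hM x x₀
  have hε : finrank (ZMod 2) (LinearMap.range ε) ≤ 1 :=
    (Submodule.finrank_le _).trans (finrank_self _).le
  have hrank := ε.finrank_range_add_finrank_ker
  rw [finrank_fintype_fun_eq_card] at hrank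
  have := Submodule.finrank_mono hker
  omega

theorem finrank_ker_faceBoundary_le_one (hM : M.Connected) :
    finrank (ZMod 2) (LinearMap.ker M.faceBoundary) ≤ 1 := by
  have hone : (1 : Orbits (M.rot * M.inv) → ZMod 2) ∈ LinearMap.ker M.faceBoundary := by
    refine LinearMap.mem_ker.mpr (funext fun v => ?_)
    induction v using Quotient.ind with
    | _ x => simp [faceBoundary_mk, CharTwo.add_self_eq_zero]
  refine finrank_le_one ⟨1, hone⟩ fun ⟨u, hu⟩ => ?_
  rcases isEmpty_or_nonempty D with hD | hD
  · exact ⟨0, Subsingleton.elim _ _⟩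
  obtain ⟨x₀⟩ := hD
  have hinv : ∀ x, u (Quotient.mk _ (M.inv x)) = u (Quotient.mk _ x) := fun x => by
    have := congr_fun (LinearMap.mem_ker.mp hu) (Quotient.mk _ x)
    rwa [faceBoundary_mk, Pi.zero_apply, CharTwo.add_eq_iff_eq_add, zero_add, eq_comm] at this
  have hrot : ∀ x, u (Quotient.mk _ (M.rot x)) = u (Quotient.mk _ x) := fun x => by
    rw [← face_mk_inv, hinv]
  refine ⟨u (Quotient.mk _ x₀), Subtype.ext (funext fun v => ?_)⟩
  induction v using Quotient.ind with
  | _ x => simpa using hM.apply_eq (f := fun x => u (Quotient.mk _ x)) hrot hinv x₀ x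

theorem range_faceBoundary_eq_ker_edgeBoundary (hM : M.Connected) (hpl : M.EulerPlanar) :
    LinearMap.range M.faceBoundary = LinearMap.ker M.edgeBoundary := by
  refine Submodule.eq_of_le_of_finrank_le
    (LinearMap.range_le_ker_iff.mpr M.edgeBoundary_comp_faceBoundary) ?_
  have h₁ := M.edgeBoundary.finrank_range_add_finrank_ker
  have h₂ := M.faceBoundary.finrank_range_add_finrank_ker
  simp only [finrank_fintype_fun_eq_card] at h₁ h₂
  have := M.card_sub_one_le_finrank_range_edgeBoundary hM
  have := M.finrank_ker_faceBoundary_le_one hM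
  simp only [EulerPlanar, vertexCount, edgeCount, faceCount, ncard_orbitSets] at hpl
  omega

theorem exists_face_potential (hM : M.Connected) (hpl : M.EulerPlanar) (z : D → ZMod 2)
    (hz_inv : ∀ x, z (M.inv x) = z x) (hz_cycle : ∀ x, ∑ y with M.rot.SameCycle x y, z y = 0) :
    ∃ u : D → ZMod 2, (∀ x, u (M.rot x) = u x + z x) ∧ ∀ x, u (M.inv x) = u x + z x := by
  let zE : Orbits M.inv → ZMod 2 := Quotient.lift z fun x y h => by
    rcases M.inv_sameCycle_iff.mp h with rfl | rfl
    exacts [rfl, (hz_inv x).symm]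
  have hzE : zE ∈ LinearMap.ker M.edgeBoundary := LinearMap.mem_ker.mpr <| funext fun v => by
    induction v using Quotient.ind with
    | _ x => simpa [edgeBoundary, incidence_mk, zE] using hz_cycle x
  rw [← M.range_faceBoundary_eq_ker_edgeBoundary hM hpl] at hzE
  obtain ⟨uF, huF⟩ := hzE
  have hinv : ∀ x, uF (Quotient.mk _ (M.inv x)) = uF (Quotient.mk _ x) + z x := fun x => by
    have : uF (Quotient.mk _ x) + uF (Quotient.mk _ (M.inv x)) = z x := by
      rw [← faceBoundary_mk, huF]
      rfl
    rw [← this, ← add_assoc, CharTwo.add_self_eq_zero, zero_add]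
  refine ⟨fun x => uF (Quotient.mk _ x), fun x => ?_, hinv⟩
  simp only [← face_mk_inv, hinv]

theorem sum_eq_zero_of_inv_invariant (f : D → ZMod 2) (hf : ∀ x, f (M.inv x) = f x) :
    ∑ x, f x = 0 :=
  sum_ninvolution M.inv (fun x => by rw [hf, CharTwo.add_self_eq_zero]) (fun x _ => M.inv_ne x)
    (fun _ => mem_univ _) M.inv_invol

theorem ClosedTC.inv_mem_iff {M : CombMap D} {s : Set D} (hs : M.ClosedTC s) {x : D} :
    M.inv x ∈ s ↔ x ∈ s :=
  ⟨fun h => M.inv_invol x ▸ (hs _ h).2, fun h => (hs x h).2⟩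

theorem ClosedTC.rot_sq_mem {M : CombMap D} {s : Set D} (hs : M.ClosedTC s) {x : D}
    (hx : x ∈ s) : M.rot (M.rot x) ∈ s := by
  simpa [threadStep, M.inv_invol] using (hs _ (hs.inv_mem_iff.mpr hx)).1

namespace FourRegular

variable {M : CombMap D}

theorem rot_pow_four (h4 : M.FourRegular) : M.rot ^ 4 = 1 := by
  ext x
  simp only [pow_succ, pow_zero, one_mul, Perm.mul_apply, Perm.one_apply]
  exact h4.1 x

theorem sameCycle_iff (h4 : M.FourRegular) {x y : D} :
    M.rot.SameCycle x y ↔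
      y = x ∨ y = M.rot x ∨ y = M.rot (M.rot x) ∨ y = M.rot (M.rot (M.rot x)) := by
  constructor
  · intro h
    obtain ⟨i, rfl⟩ := h.exists_nat_pow_eq
    rw [pow_eq_pow_mod i h4.rot_pow_four]
    have : i % 4 < 4 := Nat.mod_lt i (by norm_num)
    interval_cases i % 4 <;> simp [pow_succ]
  · rintro (rfl | rfl | rfl | rfl) <;> simp [sameCycle_apply_right, SameCycle.refl]

theorem rot_sq_mem_iff (h4 : M.FourRegular) {s : Set D} (hs : M.ClosedTC s) {x : D} :
    M.rot (M.rot x) ∈ s ↔ x ∈ s :=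
  ⟨fun h => h4.1 x ▸ hs.rot_sq_mem h, hs.rot_sq_mem⟩

theorem sum_sameCycle (h4 : M.FourRegular) {R : Type*} [AddCommMonoid R] (f : D → R)
    {c x : D} (hx : M.rot.SameCycle c x) :
    ∑ y with M.rot.SameCycle c y, f y =
      f x + f (M.rot x) + f (M.rot (M.rot x)) + f (M.rot (M.rot (M.rot x))) := by
  have h1 := h4.2.1
  have h2 := h4.2.2
  have h3 : M.rot (M.rot (M.rot x)) ≠ x := fun h =>
    h1 x (by simpa [h4.1 x] using (congrArg M.rot h).symm)
  have : ({y | M.rot.SameCycle c y} : Finset D) =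
      {x, M.rot x, M.rot (M.rot x), M.rot (M.rot (M.rot x))} := by
    ext y
    simp only [mem_filter, mem_univ, true_and, mem_insert, mem_singleton, ← h4.sameCycle_iff]
    exact ⟨hx.symm.trans, hx.trans⟩
  rw [this, sum_insert, sum_insert, sum_pair, add_assoc, add_assoc]
  · exact fun h => h1 _ h.symm
  · simp [h1 _ |>.symm, Ne.symm (h2 _)]
  · simp [h1 _ |>.symm, Ne.symm (h2 _), Ne.symm h3]

theorem sum_eq_zero_of_rot_sq (h4 : M.FourRegular) (s : Finset D) (f : D → ZMod 2)
    (hs : ∀ x ∈ s, M.rot (M.rot x) ∈ s) (hf : ∀ x ∈ s, f (M.rot (M.rot x)) = f x) :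
    ∑ x ∈ s, f x = 0 :=
  sum_involution (fun x _ => M.rot (M.rot x))
    (fun x hx => by rw [hf x hx, CharTwo.add_self_eq_zero]) (fun x _ _ => h4.2.2 x) hs
    (fun x _ => h4.1 x)

theorem sum_sameCycle_eq_zero (h4 : M.FourRegular) (c : D) (f : D → ZMod 2)
    (hinv : ∀ x, f (M.inv x) = f x)
    (hrot : ∀ x, ¬ M.rot.SameCycle c x → f (M.rot (M.rot x)) = f x) :
    ∑ x with M.rot.SameCycle c x, f x = 0 := by
  have hoff : ∑ x with ¬ M.rot.SameCycle c x, f x = 0 :=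
    h4.sum_eq_zero_of_rot_sq _ f (fun x hx => by simpa [sameCycle_apply_right] using hx)
      fun x hx => hrot x (by simpa using hx)
  have hsplit := sum_filter_add_sum_filter_not univ (M.rot.SameCycle c) f
  rwa [hoff, add_zero, M.sum_eq_zero_of_inv_invariant f hinv] at hsplit

end FourRegular

structure IsCutSeparation (M : CombMap D) (c : D) (P : D → Bool) : Prop where
  apply_inv : ∀ d, P (M.inv d) = P d
  apply_eq_of_sameCycle : ∀ d e, M.rot.SameCycle d e → ¬ M.rot.SameCycle c d → P d = P e
  exists_true : ∃ d, M.rot.SameCycle c d ∧ P d = true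
  exists_false : ∃ d, M.rot.SameCycle c d ∧ P d = false

namespace IsCutSeparation

variable {M : CombMap D} {c : D} {P : D → Bool}

theorem apply_rot (hS : M.IsCutSeparation c P) {x : D} (hx : ¬ M.rot.SameCycle c x) :
    P (M.rot x) = P x :=
  (hS.apply_eq_of_sameCycle x _ (sameCycle_apply_right.mpr (SameCycle.refl _ x)) hx).symm

theorem apply_rot_sq (hS : M.IsCutSeparation c P) {x : D} (hx : ¬ M.rot.SameCycle c x) :
    P (M.rot (M.rot x)) = P x := by
  rw [hS.apply_rot (fun h => hx (sameCycle_apply_right.mp h)), hS.apply_rot hx]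

theorem sum_sameCycle_indicator_eq_zero (hS : M.IsCutSeparation c P) (h4 : M.FourRegular)
    (b : Bool) (x : D) :
    ∑ y with M.rot.SameCycle x y, (if P y = b then 0 else 1 : ZMod 2) = 0 := by
  by_cases hx : M.rot.SameCycle c x
  · rw [filter_congr fun y _ => ⟨hx.trans, hx.symm.trans⟩]
    exact h4.sum_sameCycle_eq_zero c _ (fun y => by simp [hS.apply_inv])
      fun y hy => by simp [hS.apply_rot_sq hy]
  · refine h4.sum_eq_zero_of_rot_sq _ _ (fun y hy => by simpa [sameCycle_apply_right] using hy)
      fun y hy => ?_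
    have hy : ¬ M.rot.SameCycle c y := fun h => hx (h.trans (mem_filter.mp hy).2.symm)
    simp [hS.apply_rot_sq hy]

theorem apply_rot_ne_of_apply_rot_sq_eq (hS : M.IsCutSeparation c P) (h4 : M.FourRegular)
    {y : D} (hy : M.rot.SameCycle c y) (hopp : P (M.rot (M.rot y)) = P y) :
    P (M.rot y) ≠ P y ∧ P (M.rot (M.rot (M.rot y))) ≠ P y := by
  have hsum := hS.sum_sameCycle_indicator_eq_zero h4 (P y) y
  rw [h4.sum_sameCycle _ (SameCycle.refl _ y)] at hsum
  obtain ⟨w, hw, hPw⟩ : ∃ w, M.rot.SameCycle c w ∧ P w ≠ P y := by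
    cases hPy : P y
    · exact hS.exists_true.imp fun w hw => ⟨hw.1, by simp [hw.2]⟩
    · exact hS.exists_false.imp fun w hw => ⟨hw.1, by simp [hw.2]⟩
  have hmixed : ¬ (P (M.rot y) = P y ∧ P (M.rot (M.rot (M.rot y))) = P y) := by
    rintro ⟨h1, h3⟩
    rcases h4.sameCycle_iff.mp (hy.symm.trans hw) with h | h | h | h <;> subst h
    exacts [hPw rfl, hPw h1, hPw hopp, hPw h3]
  by_cases h1 : P (M.rot y) = P y <;> by_cases h3 : P (M.rot (M.rot (M.rot y))) = P y <;>
    simp_all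

theorem apply_rot_sq_ne (hS : M.IsCutSeparation c P) (h4 : M.FourRegular) (hM : M.Connected)
    (hpl : M.EulerPlanar) {y : D} (hy : M.rot.SameCycle c y) :
    P (M.rot (M.rot y)) ≠ P y := by
  intro hopp
  obtain ⟨h1, h3⟩ := hS.apply_rot_ne_of_apply_rot_sq_eq h4 hy hopp
  let z : D → ZMod 2 := fun x => if P x = P y then 0 else 1
  have hz_inv : ∀ x, z (M.inv x) = z x := fun x => by simp [z, hS.apply_inv]
  have hz_rot : ∀ x, ¬ M.rot.SameCycle c x → z (M.rot x) = z x := fun x hx => by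
    simp [z, hS.apply_rot hx]
  obtain ⟨u, hu_rot, hu_inv⟩ := M.exists_face_potential hM hpl z hz_inv
    (hS.sum_sameCycle_indicator_eq_zero h4 (P y))
  -- at `c` only `y` is marked by `g`, since `u (rot (rot y)) = u y + z (rot y) = u y + 1`
  let g : D → ZMod 2 := fun x => if z x = 0 ∧ u x = u y then 1 else 0
  have hg_inv : ∀ x, g (M.inv x) = g x := fun x => by
    by_cases hx : z x = 0 <;> simp [g, hz_inv, hu_inv, hx]
  have hg_rot : ∀ x, ¬ M.rot.SameCycle c x → g (M.rot (M.rot x)) = g x := fun x hx => by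
    have hx' : ¬ M.rot.SameCycle c (M.rot x) := fun h => hx (sameCycle_apply_right.mp h)
    have hu_rot_sq : u (M.rot (M.rot x)) = u x := by
      rw [hu_rot, hu_rot, hz_rot x hx, add_assoc, CharTwo.add_self_eq_zero, add_zero]
    simp only [g, hu_rot_sq, hz_rot _ hx', hz_rot x hx]
  have hg := h4.sum_sameCycle_eq_zero c g hg_inv hg_rot
  rw [h4.sum_sameCycle g hy] at hg
  simp [g, z, hu_rot, h1, h3, hopp] at hg

theorem rot_mem_or_rot_cube_mem (hS : M.IsCutSeparation c P) (h4 : M.FourRegular)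
    (hM : M.Connected) (hpl : M.EulerPlanar) {s : Set D} (hs : M.ClosedTC s) {d : D}
    (hd : M.rot.SameCycle c d) (hds : d ∈ s) :
    M.rot d ∈ s ∨ M.rot (M.rot (M.rot d)) ∈ s := by
  classical
  let f : D → ZMod 2 := fun x => if x ∈ s ∧ P x = P d then 1 else 0
  have hf := h4.sum_sameCycle_eq_zero c f (fun x => by simp [f, hs.inv_mem_iff, hS.apply_inv])
    fun x hx => by simp [f, h4.rot_sq_mem_iff hs, hS.apply_rot_sq hx]
  rw [h4.sum_sameCycle f hd] at hf
  by_contra! h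
  simp [f, hds, h.1, h.2, hS.apply_rot_sq_ne h4 hM hpl hd] at hf

end IsCutSeparation

end CombMap

/-- Let `G` be a connected 4-regular plane graph with a
cutpoint `c` (the vertex of dart `v₀`), the separation into `G₁`/`G₂` being
given by `P` as a marking of darts constant on edges and on vertices other
than `c`, with `c` incident to both parts. Then all four edges incident with
`c` belong to the same circuit of the threaded circuit partition of `G`: any
two darts at `c` lie in a common set of darts closed under thread-continuation
and reversal (hence in the same undirected threaded circuit). -/
theorem cutpoint_edges_in_same_threaded_circuit
    {D : Type} [Fintype D] [DecidableEq D] (M : CombMap D)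
    (h4 : M.FourRegular) (hconn : M.Connected) (hpl : M.EulerPlanar)
    (P : D → Bool) (v₀ : D)
    (hedge : ∀ d, P (M.inv d) = P d)
    (hvert : ∀ d e, M.rot.SameCycle d e → ¬ M.rot.SameCycle v₀ d → P d = P e)
    (h1 : ∃ d, M.rot.SameCycle v₀ d ∧ P d = true)
    (h2 : ∃ d, M.rot.SameCycle v₀ d ∧ P d = false) :
    ∀ d e : D, M.rot.SameCycle v₀ d → M.rot.SameCycle v₀ e →
      ∀ s : Set D, d ∈ s → M.ClosedTC s → e ∈ s := by
  intro d e hd he s hds hs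
  have hS : M.IsCutSeparation v₀ P := ⟨hedge, hvert, h1, h2⟩
  have hodd : M.rot d ∈ s ∧ M.rot (M.rot (M.rot d)) ∈ s := by
    rcases hS.rot_mem_or_rot_cube_mem h4 hconn hpl hs hd hds with h | h
    · exact ⟨h, hs.rot_sq_mem h⟩
    · exact ⟨by simpa [h4.1 d] using hs.rot_sq_mem h, h⟩
  rcases h4.sameCycle_iff.mp (hd.symm.trans he) with rfl | rfl | rfl | rfl
  exacts [hds, hodd.1, hs.rot_sq_mem hds, hodd.2]
end

section
/- In a 4-regular plane graph with its threaded circuit partition directed, every vertex has exactly two incoming edges, and under a proper 2-coloring of the faces, exactly one incoming edge at each vertex has a green face on its left and exactly one has a blue face on its left. -/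
private lemma cm_singleton_count {D : Type} [Fintype D] [DecidableEq D]
    (P Q : D → Prop) (b : Bool) (g : D → Bool) (x y : D)
    (hx : P x ∧ Q x) (hgx : g x = b) (hgy : g y ≠ b)
    (mem4 : ∀ e, P e → Q e → e = x ∨ e = y) :
    {e | P e ∧ Q e ∧ g e = b}.ncard = 1 := by
  have hxx : {e | P e ∧ Q e ∧ g e = b} = {x} := by
    ext e
    constructor
    · rintro ⟨hp, hq, hge⟩
      rcases mem4 e hp hq with rfl | rfl
      · rfl
      · exact absurd hge hgy
    · rintro rfl; exact ⟨hx.1, hx.2, hgx⟩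
  rw [hxx]; exact Set.ncard_singleton x

private lemma cm_key_count {D : Type} [Fintype D] [DecidableEq D]
    (P Q : D → Prop) (g : D → Bool) (x y : D) (hxy : x ≠ y)
    (hS : {e | P e ∧ Q e} = {x, y}) (hg : g x = !(g y)) :
    {e | P e ∧ Q e}.ncard = 2 ∧
    {e | P e ∧ Q e ∧ g e = true}.ncard = 1 ∧
    {e | P e ∧ Q e ∧ g e = false}.ncard = 1 := by
  have hx : P x ∧ Q x := by
    have h : x ∈ {e | P e ∧ Q e} := by rw [hS]; exact Or.inl rfl
    exact h
  have hy' : P y ∧ Q y := by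
    have h : y ∈ {e | P e ∧ Q e} := by rw [hS]; exact Or.inr rfl
    exact h
  have mem4 : ∀ e, P e → Q e → e = x ∨ e = y := by
    intro e hp hq
    have h : e ∈ ({x, y} : Set D) := hS ▸ (show e ∈ {e | P e ∧ Q e} from ⟨hp, hq⟩)
    exact h
  have mem4' : ∀ e, P e → Q e → e = y ∨ e = x := fun e hp hq => (mem4 e hp hq).symm
  refine ⟨by rw [hS]; exact Set.ncard_pair hxy, ?_, ?_⟩
  · cases hgy : g y with
    | false =>
        have hgx : g x = true := by rw [hgy] at hg; simpa using hg
        exact cm_singleton_count P Q true g x y hx hgx (by simp [hgy]) mem4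
    | true =>
        have hgx : g x = false := by rw [hgy] at hg; simpa using hg
        exact cm_singleton_count P Q true g y x hy' hgy (by simp [hgx]) mem4'
  · cases hgy : g y with
    | false =>
        have hgx : g x = true := by rw [hgy] at hg; simpa using hg
        exact cm_singleton_count P Q false g y x hy' hgy (by simp [hgx]) mem4'
    | true =>
        have hgx : g x = false := by rw [hgy] at hg; simpa using hg
        exact cm_singleton_count P Q false g x y hx hgx (by simp [hgy]) mem4

private lemma cm_sc_iff {D : Type} [Fintype D] [DecidableEq D] (M : CombMap D)
    (h4 : M.FourRegular) (v e : D) :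
    M.rot.SameCycle v e ↔
      e = v ∨ e = M.rot v ∨ e = M.rot (M.rot v) ∨ e = M.rot (M.rot (M.rot v)) := by
  have h1 : M.rot ^ (4:ℕ) = 1 := by
    ext d; simpa [pow_succ, Equiv.Perm.mul_apply] using h4.1 d
  constructor
  · rintro ⟨n, hn⟩
    have key : M.rot ^ n = M.rot ^ (n % 4) := by
      conv_lhs => rw [← Int.emod_add_mul_ediv n 4]
      rw [zpow_add, zpow_mul]
      have h4z : M.rot ^ (4:ℤ) = 1 := by
        rw [show (4:ℤ) = ((4:ℕ):ℤ) by norm_num, zpow_natCast, h1]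
      rw [h4z, one_zpow, mul_one]
    rw [key] at hn
    have hm0 : 0 ≤ n % 4 := Int.emod_nonneg n (by norm_num)
    have hm4 : n % 4 < 4 := Int.emod_lt_of_pos n (by norm_num)
    set m := n % 4 with hm
    interval_cases m
    · left; rw [← hn]; simp
    · right; left; rw [← hn]; simp
    · right; right; left; rw [← hn]
      rw [show (2:ℤ) = ((2:ℕ):ℤ) by norm_num, zpow_natCast]
      simp [pow_succ, Equiv.Perm.mul_apply]
    · right; right; right; rw [← hn]
      rw [show (3:ℤ) = ((3:ℕ):ℤ) by norm_num, zpow_natCast]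
      simp [pow_succ, Equiv.Perm.mul_apply]
  · rintro (rfl | rfl | rfl | rfl)
    · exact Equiv.Perm.SameCycle.refl _ _
    · exact ⟨1, by simp⟩
    · exact ⟨2, by
        rw [show (2:ℤ) = ((2:ℕ):ℤ) by norm_num, zpow_natCast]
        simp [pow_succ, Equiv.Perm.mul_apply]⟩
    · exact ⟨3, by
        rw [show (3:ℤ) = ((3:ℕ):ℤ) by norm_num, zpow_natCast]
        simp [pow_succ, Equiv.Perm.mul_apply]⟩

/-- Let `G` be a connected, bridgeless 4-regular plane graph
whose faces are properly 2-coloured (`c` is constant on faces and differs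
across each edge; `c x` is the colour of the face to the left of the directed
dart `x`). Direct the threaded circuit partition: `O` is the set of darts that
are traversed (exactly one dart per edge, closed under thread-continuation).
Then every vertex has exactly two incoming edge-ends (darts `e` at the vertex
whose edge is traversed towards the vertex, i.e. `inv e ∈ O`), and exactly one
incoming edge has a green face on its left and exactly one has a blue face on
its left. -/
theorem directed_threaded_partition_in_degree_and_left_colors
    {D : Type} [Fintype D] [DecidableEq D] (M : CombMap D)
    (h4 : M.FourRegular) (hconn : M.Connected)
    (c : D → Bool)
    (hface : ∀ d, c (M.rot (M.inv d)) = c d)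
    (hadj : ∀ d, c (M.inv d) ≠ c d)
    (O : Set D)
    (horient : ∀ d, d ∈ O ↔ M.inv d ∉ O)
    (hthread : ∀ d ∈ O, M.threadStep d ∈ O) :
    ∀ v : D,
      {e | M.rot.SameCycle v e ∧ M.inv e ∈ O}.ncard = 2 ∧
      {e | M.rot.SameCycle v e ∧ M.inv e ∈ O ∧ c (M.inv e) = true}.ncard = 1 ∧
      {e | M.rot.SameCycle v e ∧ M.inv e ∈ O ∧ c (M.inv e) = false}.ncard = 1 := by
  classical
  -- the threadStep permutation
  set T : Equiv.Perm D := M.rot * M.rot * M.inv with hT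
  have hTapp : ∀ d, T d = M.threadStep d := fun d => rfl
  have hTcl : ∀ n : ℕ, ∀ d ∈ O, (T ^ n) d ∈ O := by
    intro n
    induction n with
    | zero => intro d hd; simpa using hd
    | succ n ih =>
        intro d hd
        have h1 : (T ^ (n+1)) d = (T ^ n) (T d) := by
          rw [pow_succ, Equiv.Perm.mul_apply]
        rw [h1]
        exact ih _ (by rw [hTapp]; exact hthread d hd)
  have hL1 : ∀ e, M.inv e ∈ O ↔ M.rot (M.rot e) ∈ O := by
    intro e
    constructor
    · intro h
      have h2 := hthread _ h
      simpa [CombMap.threadStep, M.inv_invol] using h2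
    · intro h
      have hk : 0 < orderOf T := orderOf_pos T
      have h3 : T (M.inv e) ∈ O := by
        have heq : T (M.inv e) = M.rot (M.rot e) := by
          simp [hT, Equiv.Perm.mul_apply, M.inv_invol]
        rw [heq]; exact h
      have h2 : (T ^ (orderOf T - 1)) (T (M.inv e)) = M.inv e := by
        rw [← Equiv.Perm.mul_apply, ← pow_succ,
          show orderOf T - 1 + 1 = orderOf T from Nat.succ_pred_eq_of_pos hk,
          pow_orderOf_eq_one]
        rfl
      have h5 := hTcl (orderOf T - 1) _ h3
      rwa [h2] at h5
  have halt : ∀ e, M.inv (M.rot (M.rot e)) ∈ O ↔ M.inv e ∉ O := by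
    intro e
    have h1 := horient (M.rot (M.rot e))
    have h2 := hL1 e
    constructor
    · intro h he
      exact h1.mp (h2.mp he) h
    · intro h
      by_contra h'
      exact h (h2.mpr (h1.mpr h'))
  have hcr : ∀ x, c (M.rot x) = c (M.inv x) := by
    intro x; have h := hface (M.inv x); rwa [M.inv_invol] at h
  have bne : ∀ a b : Bool, a ≠ b → a = !b := by decide
  intro v
  -- distinctness
  have d01 : v ≠ M.rot v := fun h => h4.2.1 v h.symm
  have d02 : v ≠ M.rot (M.rot v) := fun h => h4.2.2 v h.symm
  have d03 : v ≠ M.rot (M.rot (M.rot v)) := by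
    intro h
    have h2 := congrArg M.rot h
    rw [h4.1 v] at h2
    exact h4.2.1 v h2
  have d12 : M.rot v ≠ M.rot (M.rot v) := fun h => d01 (M.rot.injective h)
  have d13 : M.rot v ≠ M.rot (M.rot (M.rot v)) := fun h => d02 (M.rot.injective h)
  have d23 : M.rot (M.rot v) ≠ M.rot (M.rot (M.rot v)) :=
    fun h => d01 (M.rot.injective (M.rot.injective h))
  -- same-cycle facts
  have sc0 : M.rot.SameCycle v v := Equiv.Perm.SameCycle.refl _ _
  have sc1 : M.rot.SameCycle v (M.rot v) := ⟨1, by simp⟩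
  have sc2 : M.rot.SameCycle v (M.rot (M.rot v)) :=
    (cm_sc_iff M h4 v _).mpr (Or.inr (Or.inr (Or.inl rfl)))
  have sc3 : M.rot.SameCycle v (M.rot (M.rot (M.rot v))) :=
    (cm_sc_iff M h4 v _).mpr (Or.inr (Or.inr (Or.inr rfl)))
  -- colors
  have cinv0 : c (M.inv v) = !(c v) := bne _ _ (hadj v)
  have crot1 : c (M.rot v) = !(c v) := by rw [hcr]; exact cinv0
  have cinv1 : c (M.inv (M.rot v)) = c v := by
    have h := bne _ _ (hadj (M.rot v))
    rw [crot1] at h; simpa using h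
  have crot2 : c (M.rot (M.rot v)) = c v := by rw [hcr]; exact cinv1
  have cinv2 : c (M.inv (M.rot (M.rot v))) = !(c v) := by
    have h := bne _ _ (hadj (M.rot (M.rot v)))
    rw [crot2] at h; exact h
  have crot3 : c (M.rot (M.rot (M.rot v))) = !(c v) := by rw [hcr]; exact cinv2
  have cinv3 : c (M.inv (M.rot (M.rot (M.rot v)))) = c v := by
    have h := bne _ _ (hadj (M.rot (M.rot (M.rot v))))
    rw [crot3] at h; simpa using h
  by_cases hv : M.inv v ∈ O
  · by_cases h1 : M.inv (M.rot v) ∈ O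
    · have n2 : M.inv (M.rot (M.rot v)) ∉ O := fun h => (halt v).mp h hv
      have n3 : M.inv (M.rot (M.rot (M.rot v))) ∉ O := fun h => (halt (M.rot v)).mp h h1
      have hS : {e | M.rot.SameCycle v e ∧ M.inv e ∈ O} = {v, M.rot v} := by
        ext e
        constructor
        · rintro ⟨hs, hin⟩
          rcases (cm_sc_iff M h4 v e).mp hs with rfl | rfl | rfl | rfl
          · exact Or.inl rfl
          · exact Or.inr rfl
          · exact absurd hin n2
          · exact absurd hin n3
        · rintro (rfl | rfl)
          · exact ⟨sc0, hv⟩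
          · exact ⟨sc1, h1⟩
      exact cm_key_count (fun e => M.rot.SameCycle v e) (fun e => M.inv e ∈ O)
        (fun e => c (M.inv e)) v (M.rot v) d01 hS (by show c (M.inv v) = !(c (M.inv (M.rot v))); rw [cinv0, cinv1])
    · have n2 : M.inv (M.rot (M.rot v)) ∉ O := fun h => (halt v).mp h hv
      have i3 : M.inv (M.rot (M.rot (M.rot v))) ∈ O := (halt (M.rot v)).mpr h1
      have hS : {e | M.rot.SameCycle v e ∧ M.inv e ∈ O} = {v, M.rot (M.rot (M.rot v))} := by
        ext e
        constructor
        · rintro ⟨hs, hin⟩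
          rcases (cm_sc_iff M h4 v e).mp hs with rfl | rfl | rfl | rfl
          · exact Or.inl rfl
          · exact absurd hin h1
          · exact absurd hin n2
          · exact Or.inr rfl
        · rintro (rfl | rfl)
          · exact ⟨sc0, hv⟩
          · exact ⟨sc3, i3⟩
      exact cm_key_count (fun e => M.rot.SameCycle v e) (fun e => M.inv e ∈ O)
        (fun e => c (M.inv e)) v (M.rot (M.rot (M.rot v))) d03 hS (by show c (M.inv v) = !(c (M.inv (M.rot (M.rot (M.rot v))))); rw [cinv0, cinv3])
  · have i2 : M.inv (M.rot (M.rot v)) ∈ O := (halt v).mpr hv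
    by_cases h1 : M.inv (M.rot v) ∈ O
    · have n3 : M.inv (M.rot (M.rot (M.rot v))) ∉ O := fun h => (halt (M.rot v)).mp h h1
      have hS : {e | M.rot.SameCycle v e ∧ M.inv e ∈ O} = {M.rot (M.rot v), M.rot v} := by
        ext e
        constructor
        · rintro ⟨hs, hin⟩
          rcases (cm_sc_iff M h4 v e).mp hs with rfl | rfl | rfl | rfl
          · exact absurd hin hv
          · exact Or.inr rfl
          · exact Or.inl rfl
          · exact absurd hin n3
        · rintro (rfl | rfl)
          · exact ⟨sc2, i2⟩
          · exact ⟨sc1, h1⟩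
      exact cm_key_count (fun e => M.rot.SameCycle v e) (fun e => M.inv e ∈ O)
        (fun e => c (M.inv e)) (M.rot (M.rot v)) (M.rot v) d12.symm hS (by show c (M.inv (M.rot (M.rot v))) = !(c (M.inv (M.rot v))); rw [cinv2, cinv1])
    · have i3 : M.inv (M.rot (M.rot (M.rot v))) ∈ O := (halt (M.rot v)).mpr h1
      have hS : {e | M.rot.SameCycle v e ∧ M.inv e ∈ O}
          = {M.rot (M.rot v), M.rot (M.rot (M.rot v))} := by
        ext e
        constructor
        · rintro ⟨hs, hin⟩
          rcases (cm_sc_iff M h4 v e).mp hs with rfl | rfl | rfl | rfl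
          · exact absurd hin hv
          · exact absurd hin h1
          · exact Or.inl rfl
          · exact Or.inr rfl
        · rintro (rfl | rfl)
          · exact ⟨sc2, i2⟩
          · exact ⟨sc3, i3⟩
      exact cm_key_count (fun e => M.rot.SameCycle v e) (fun e => M.inv e ∈ O)
        (fun e => c (M.inv e)) (M.rot (M.rot v)) (M.rot (M.rot (M.rot v))) d23 hS
        (by show c (M.inv (M.rot (M.rot v))) = !(c (M.inv (M.rot (M.rot (M.rot v))))); rw [cinv2, cinv3])
end
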